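/- For the canonical nonlinear connection M^{(j)}_{(β)α} = −H^γ_{αβ} x^j_γ attached to a semi-Riemannian temporal metric h with Christoffel symbols H^γ_{αβ}, the torsion component R^{(m)}_{(μ)αβ} = δM^{(m)}_{(μ)α}/δt^β − δM^{(m)}_{(μ)β}/δt^α equals −H^γ_{μαβ} x^m_γ, where H^γ_{μαβ} is the curvature tensor of h and δ/δt^α = ∂/∂t^α − M^{(j)}_{(β)α} ∂/∂x^j_β. -/

import Mathlib

/-- Partial derivative of `f : (ι → ℝ) → ℝ` in the `i`-th coordinate direction. -/
noncomputable def pd {ι : Type*} [DecidableEq ι] (i : ι) (f : (ι → ℝ) → ℝ) (t : ι → ℝ) : ℝ :=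
  deriv (fun s => f (Function.update t i s)) (t i)

/-- Partial derivative `∂/∂t^α` of a function of `(t, x^i_α)`. -/
noncomputable def tpd {p n : ℕ} (α : Fin p)
    (F : (Fin p → ℝ) → (Fin n × Fin p → ℝ) → ℝ) (t : Fin p → ℝ) (X : Fin n × Fin p → ℝ) : ℝ :=
  deriv (fun s => F (Function.update t α s) X) (t α)

/-- Partial derivative `∂/∂x^j_β` of a function of `(t, x^i_α)`. -/
noncomputable def xpd {p n : ℕ} (j : Fin n) (β : Fin p)
    (F : (Fin p → ℝ) → (Fin n × Fin p → ℝ) → ℝ) (t : Fin p → ℝ) (X : Fin n × Fin p → ℝ) : ℝ :=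
  deriv (fun s => F t (Function.update X (j, β) s)) (X (j, β))

/-- Adapted derivative `δ/δt^α = ∂/∂t^α − M^{(j)}_{(ε)α} ∂/∂x^j_ε`. -/
noncomputable def deltat {p n : ℕ}
    (M : Fin n → Fin p → Fin p → (Fin p → ℝ) → (Fin n × Fin p → ℝ) → ℝ)
    (α : Fin p) (F : (Fin p → ℝ) → (Fin n × Fin p → ℝ) → ℝ)
    (t : Fin p → ℝ) (X : Fin n × Fin p → ℝ) : ℝ :=
  tpd α F t X - ∑ j, ∑ ε, M j ε α t X * xpd j ε F t X

/-!
The canonical connection is linear in the fibre coordinates `x^m_γ`, with coefficients depending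
on `t` only. On such a function `δ/δt^β` differentiates the coefficients and subtracts
`M^{(m)}_{(ε)β}` times the coefficient of `x^m_ε`; for `M^{(m)}_{(μ)α}` itself this gives
`−(∂_β H^γ_{μα} + H^ε_{μα} H^γ_{εβ}) x^m_γ`, and antisymmetrising in `α, β` produces the curvature.
The symmetry of `H` is what brings both terms into the index order of the curvature.
-/

section PartialDerivative

variable {ι : Type*} [DecidableEq ι] {f : (ι → ℝ) → ℝ} {x : ι → ℝ}

theorem DifferentiableAt.hasDerivAt_pd [Fintype ι] (hf : DifferentiableAt ℝ f x) (i : ι) :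
    HasDerivAt (fun s => f (Function.update x i s)) (pd i f x) (x i) := by
  have hu := (hasDerivAt_update x i (x i)).differentiableAt
  rw [← Function.update_eq_self i x] at hf
  exact (hf.comp (x i) hu).hasDerivAt

theorem pd_neg (i : ι) : pd i (fun x => -f x) x = -pd i f x :=
  deriv.fun_neg

theorem hasDerivAt_update_apply (i k : ι) :
    HasDerivAt (fun s => Function.update x i s k) (Pi.single (M := fun _ => ℝ) i 1 k) (x i) :=
  hasDerivAt_pi.mp (hasDerivAt_update x i (x i)) k

end PartialDerivative

section SumMulApply

variable {p n : ℕ} (f : Fin p → (Fin p → ℝ) → ℝ) (m : Fin n) (t : Fin p → ℝ)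
  (X : Fin n × Fin p → ℝ)

theorem tpd_sum_mul_apply (hf : ∀ γ, DifferentiableAt ℝ (f γ) t) (β : Fin p) :
    tpd β (fun t X => ∑ γ, f γ t * X (m, γ)) t X = ∑ γ, pd β (f γ) t * X (m, γ) :=
  (HasDerivAt.fun_sum fun γ _ => ((hf γ).hasDerivAt_pd β).mul_const _).deriv

theorem xpd_sum_mul_apply (j : Fin n) (ε : Fin p) :
    xpd j ε (fun t X => ∑ γ, f γ t * X (m, γ)) t X = if m = j then f ε t else 0 := by
  rw [xpd, (HasDerivAt.fun_sum fun γ _ =>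
    (hasDerivAt_update_apply (x := X) (j, ε) (m, γ)).const_mul (f γ t)).deriv]
  by_cases h : m = j
  · subst h
    simp [Pi.single_apply]
  · simp [h]

theorem deltat_sum_mul_apply
    (M : Fin n → Fin p → Fin p → (Fin p → ℝ) → (Fin n × Fin p → ℝ) → ℝ)
    (hf : ∀ γ, DifferentiableAt ℝ (f γ) t) (β : Fin p) :
    deltat M β (fun t X => ∑ γ, f γ t * X (m, γ)) t X =
      ∑ γ, pd β (f γ) t * X (m, γ) - ∑ ε, M m ε β t X * f ε t := by
  simp only [deltat, tpd_sum_mul_apply f m t X hf, xpd_sum_mul_apply, mul_ite, mul_zero]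
  rw [Finset.sum_comm]
  simp

end SumMulApply

theorem deltat_canonical_connection {p n : ℕ} (H : Fin p → Fin p → Fin p → (Fin p → ℝ) → ℝ)
    (M : Fin n → Fin p → Fin p → (Fin p → ℝ) → (Fin n × Fin p → ℝ) → ℝ)
    (hM : ∀ j β α t X, M j β α t X = -∑ γ, H γ β α t * X (j, γ))
    (m : Fin n) (μ α β : Fin p) (t : Fin p → ℝ) (X : Fin n × Fin p → ℝ)
    (hH : ∀ γ, DifferentiableAt ℝ (H γ μ α) t) :
    deltat M β (M m μ α) t X =
      -∑ γ, (pd β (H γ μ α) t + ∑ ε, H ε μ α t * H γ ε β t) * X (m, γ) := by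
  have hMμα : M m μ α = fun t X => ∑ γ, -H γ μ α t * X (m, γ) := by
    ext t X
    simp only [hM, neg_mul, Finset.sum_neg_distrib]
  rw [hMμα, deltat_sum_mul_apply (fun γ t => -H γ μ α t) m t X M fun γ => (hH γ).neg]
  simp only [pd_neg, hM, add_mul, Finset.sum_add_distrib, Finset.sum_mul, neg_mul, mul_neg,
    Finset.sum_neg_distrib, neg_neg, neg_add, ← sub_eq_add_neg]
  rw [Finset.sum_comm]
  congr! 3 with γ - ε -
  ring

/-- For the canonical nonlinear connection `M^{(j)}_{(β)α} = −H^γ_{αβ} x^j_γ`, the torsion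
component `R^{(m)}_{(μ)αβ} = δM^{(m)}_{(μ)α}/δt^β − δM^{(m)}_{(μ)β}/δt^α` equals
`−H^γ_{μαβ} x^m_γ`, where `H^γ_{μαβ}` is the curvature of `h`. -/
theorem canonical_temporal_torsion {p n : ℕ}
    (H : Fin p → Fin p → Fin p → (Fin p → ℝ) → ℝ)
    (hsmooth : ∀ γ α β, ContDiff ℝ 2 (H γ α β))
    (hsym : ∀ γ α β, H γ α β = H γ β α)
    (M : Fin n → Fin p → Fin p → (Fin p → ℝ) → (Fin n × Fin p → ℝ) → ℝ)
    (hM : ∀ j β α t X, M j β α t X = -∑ γ, H γ α β t * X (j, γ))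
    (Hcurv : Fin p → Fin p → Fin p → Fin p → (Fin p → ℝ) → ℝ)
    (hHcurv : ∀ γ μ α β t, Hcurv γ μ α β t =
      pd β (H γ μ α) t - pd α (H γ μ β) t +
        ∑ ε, (H ε μ α t * H γ ε β t - H ε μ β t * H γ ε α t))
    (R : Fin n → Fin p → Fin p → Fin p → (Fin p → ℝ) → (Fin n × Fin p → ℝ) → ℝ)
    (hR : ∀ m μ α β t X, R m μ α β t X =
      deltat M β (M m μ α) t X - deltat M α (M m μ β) t X) :
    ∀ m μ α β t X, R m μ α β t X = -∑ γ, Hcurv γ μ α β t * X (m, γ) := by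
  have hM' : ∀ j β α t X, M j β α t X = -∑ γ, H γ β α t * X (j, γ) := by
    intro j β α t X
    simp only [hM, hsym _ α β]
  have hH : ∀ γ α β t, DifferentiableAt ℝ (H γ α β) t := fun γ α β t =>
    ((hsmooth γ α β).differentiable (by norm_num)).differentiableAt
  intro m μ α β t X
  rw [hR, deltat_canonical_connection H M hM' m μ α β t X (hH · μ α t),
    deltat_canonical_connection H M hM' m μ β α t X (hH · μ β t)]
  simp only [hHcurv, add_mul, sub_mul, Finset.sum_mul, Finset.sum_add_distrib,
    Finset.sum_sub_distrib]
  ring
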